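/- Let U be the positive hyperoctant, 1 ≤ p ≤ 2, and let K be the operator (K f)(x) = ∫_{Ω'} K(u) f(D(u) x) dμ(u) on L^p(U), where D(u) = diag(d_1(u), …, d_n(u)) with all d_k(u) > 0 and |K(u)| (∏_k d_k(u))^{-1/p} integrable on Ω'. Then for every f ∈ L^p(U), the modified Mellin transform satisfies (M K f)(s) = φ(s) · (M f)(s) for a.e. s ∈ ℝ^n, where φ(s) = ∫_{Ω'} K(u) ∏_k d_k(u)^{-1/p − i s_k} dμ(u); moreover φ is bounded and continuous on ℝ^n. -/

import Mathlib

open MeasureTheory Matrix Filter Topology Complex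
open scoped ENNReal NNReal Real

/-!
If `x ^ (-1/q) f ∈ L¹(U)`, the Hausdorff integral converges absolutely in `(u, x)` against the
Mellin kernel `x ^ z`, `z = -1/q + i s`; Fubini and the substitution `y = D(u) x` then give
`∫_U x ^ z (K f)(x) dx = (∫ K(u) D(u) ^ (-z-1) dμ) ∫_U y ^ z f(y) dy`, and `-z - 1 = -1/p - i s`.
Continuous compactly supported functions have this property and are dense in `L^p(U)` (`p < ∞`),
while the set of `f` satisfying the a.e. identity is closed in `L^p(U)`, because convergence in
`L^q` gives a.e. convergence along a subsequence.
-/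

namespace HausdorffMellin

variable {n : ℕ}

lemma one_div_toReal_add_one_div_toReal {p q : ℝ≥0∞} (hp : p ≠ 0) (hq : q ≠ 0)
    (hpq : 1 / p + 1 / q = 1) : 1 / p.toReal + 1 / q.toReal = 1 := by
  have h := congrArg ENNReal.toReal hpq
  rwa [ENNReal.toReal_add (by simpa using hp) (by simpa using hq), ENNReal.toReal_div,
    ENNReal.toReal_div, ENNReal.toReal_one] at h

theorem isClosed_setOf_ae_eq_mul {X α : Type*} [TopologicalSpace X] [SequentialSpace X]
    [MeasurableSpace α] {ν : Measure α} {q : ℝ≥0∞} [Fact (1 ≤ q)] {A B : X → Lp ℂ q ν}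
    (hA : Continuous A) (hB : Continuous B) (φ : α → ℂ) :
    IsClosed {x | ∀ᵐ s ∂ν, A x s = φ s * B x s} := by
  refine IsSeqClosed.isClosed fun x y hx hxy => ?_
  obtain ⟨ns, hns, hAy⟩ :=
    (tendstoInMeasure_of_tendsto_Lp ((hA.tendsto y).comp hxy)).exists_seq_tendsto_ae
  obtain ⟨ms, hms, hBy⟩ := (tendstoInMeasure_of_tendsto_Lp
    (((hB.tendsto y).comp hxy).comp hns.tendsto_atTop)).exists_seq_tendsto_ae
  filter_upwards [ae_all_iff.2 hx, hAy, hBy] with s hs hAs hBs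
  exact tendsto_nhds_unique ((hAs.comp hms.tendsto_atTop).congr fun i => hs _) (hBs.const_mul _)

def posOrthant (n : ℕ) : Set (Fin n → ℝ) := {x | ∀ j, 0 < x j}

lemma measurableSet_posOrthant : MeasurableSet (posOrthant n) := by
  simp only [posOrthant, Set.ofPred_forall]
  exact .iInter fun j => measurableSet_lt measurable_const (measurable_pi_apply j)

lemma mul_mem_posOrthant_iff {c x : Fin n → ℝ} (hc : ∀ k, 0 < c k) :
    c * x ∈ posOrthant n ↔ x ∈ posOrthant n :=
  forall_congr' fun j => mul_pos_iff_of_pos_left (hc j)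

lemma map_mul_volume_restrict_posOrthant {c : Fin n → ℝ} (hc : ∀ k, 0 < c k) :
    (volume.restrict (posOrthant n)).map (c * ·) =
      ENNReal.ofReal (∏ k, c k)⁻¹ • volume.restrict (posOrthant n) := by
  have hprod : 0 < ∏ k, c k := Finset.prod_pos fun k _ => hc k
  have hlin : (c * ·) = ⇑(toLin' (diagonal c)) := by
    funext x; ext j; simp [toLin'_apply, mulVec_diagonal]
  have hpre : (c * ·) ⁻¹' posOrthant n = posOrthant n := Set.ext fun x => mul_mem_posOrthant_iff hc
  conv_lhs => rw [← hpre]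
  rw [← Measure.restrict_map (by fun_prop) measurableSet_posOrthant, hlin,
    Real.map_matrix_volume_pi_eq_smul_volume_pi (by simpa [det_diagonal] using hprod.ne'),
    Measure.restrict_smul, det_diagonal, abs_of_pos (inv_pos.2 hprod)]

lemma integral_comp_mul_posOrthant {E : Type*} [NormedAddCommGroup E] [NormedSpace ℝ E]
    {c : Fin n → ℝ} (hc : ∀ k, 0 < c k) {g : (Fin n → ℝ) → E}
    (hg : AEStronglyMeasurable g (volume.restrict (posOrthant n))) :
    ∫ x in posOrthant n, g (c * x) = (∏ k, c k)⁻¹ • ∫ x in posOrthant n, g x := by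
  have hg' : AEStronglyMeasurable g ((volume.restrict (posOrthant n)).map (c * ·)) := by
    rw [map_mul_volume_restrict_posOrthant hc]
    exact hg.mono_ac Measure.smul_absolutelyContinuous
  rw [← integral_map (by fun_prop) hg', map_mul_volume_restrict_posOrthant hc,
    integral_smul_measure,
    ENNReal.toReal_ofReal (inv_nonneg.2 (Finset.prod_nonneg fun k _ => (hc k).le))]

lemma integrable_comp_mul_posOrthant {E : Type*} [NormedAddCommGroup E]
    {c : Fin n → ℝ} (hc : ∀ k, 0 < c k) {g : (Fin n → ℝ) → E}
    (hg : Integrable g (volume.restrict (posOrthant n))) :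
    Integrable (fun x => g (c * x)) (volume.restrict (posOrthant n)) := by
  have hg' := hg.smul_measure (ENNReal.ofReal_ne_top (r := (∏ k, c k)⁻¹))
  rw [← map_mul_volume_restrict_posOrthant hc] at hg'
  exact hg'.comp_measurable (by fun_prop)

lemma norm_prod_ofReal_cpow {x : Fin n → ℝ} (hx : ∀ j, 0 < x j) (z : Fin n → ℂ) :
    ‖∏ j, (x j : ℂ) ^ z j‖ = ∏ j, x j ^ (z j).re := by
  simp only [norm_prod, norm_cpow_eq_rpow_re_of_pos (hx _)]

lemma norm_prod_ofReal_cpow_of_re_eq {x : Fin n → ℝ} (hx : ∀ j, 0 < x j) {z : Fin n → ℂ} {r : ℝ}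
    (hz : ∀ j, (z j).re = r) :
    ‖∏ j, (x j : ℂ) ^ z j‖ = (∏ j, x j) ^ r := by
  rw [norm_prod_ofReal_cpow hx, ← Real.finsetProd_rpow _ _ fun j _ => (hx j).le]
  simp only [hz]

lemma prod_ofReal_mul_cpow {c x : Fin n → ℝ} (hc : ∀ k, 0 ≤ c k) (hx : ∀ j, 0 ≤ x j)
    (z : Fin n → ℂ) :
    ∏ j, (((c * x) j : ℝ) : ℂ) ^ z j = (∏ j, (c j : ℂ) ^ z j) * ∏ j, (x j : ℂ) ^ z j := by
  simp only [← Finset.prod_mul_distrib, Pi.mul_apply, ofReal_mul,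
    mul_cpow_ofReal_nonneg (hc _) (hx _)]

lemma prod_ofReal_cpow_neg_mul_inv {c : Fin n → ℝ} (hc : ∀ k, 0 < c k) (z : Fin n → ℂ) :
    (∏ j, (c j : ℂ) ^ (-z j)) * (((∏ k, c k)⁻¹ : ℝ) : ℂ) = ∏ j, (c j : ℂ) ^ (-z j - 1) := by
  push_cast
  rw [← Finset.prod_inv_distrib, ← Finset.prod_mul_distrib]
  refine Finset.prod_congr rfl fun j _ => ?_
  rw [cpow_sub _ _ (ofReal_ne_zero.2 (hc j).ne'), cpow_one, div_eq_mul_inv]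

lemma prod_cpow_mul_comp_mul {c x : Fin n → ℝ} (hc : ∀ k, 0 < c k) (hx : x ∈ posOrthant n)
    (z : Fin n → ℂ) (g : (Fin n → ℝ) → ℂ) :
    (∏ j, (x j : ℂ) ^ z j) * g (c * x) =
      (∏ j, (c j : ℂ) ^ (-z j)) * ((∏ j, (((c * x) j : ℝ) : ℂ) ^ z j) * g (c * x)) := by
  have hcancel : ∏ j, (c j : ℂ) ^ (-z j) * (c j : ℂ) ^ z j = 1 := Finset.prod_eq_one fun j _ => by
    rw [← cpow_add _ _ (ofReal_ne_zero.2 (hc j).ne'), neg_add_cancel, cpow_zero]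
  rw [prod_ofReal_mul_cpow (fun k => (hc k).le) (fun j => (hx j).le), ← mul_assoc, ← mul_assoc,
    ← Finset.prod_mul_distrib, hcancel, one_mul]

noncomputable def mellinIntegral (z : Fin n → ℂ) (f : (Fin n → ℝ) → ℂ) : ℂ :=
  ∫ x in posOrthant n, (∏ j, (x j : ℂ) ^ z j) * f x

def MellinIntegrable (a : ℝ) (f : (Fin n → ℝ) → ℂ) : Prop :=
  Integrable (fun x => (∏ j, x j ^ (-a)) * ‖f x‖) (volume.restrict (posOrthant n))

lemma MellinIntegrable.congr {a : ℝ} {f g : (Fin n → ℝ) → ℂ} (hf : MellinIntegrable a f)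
    (hfg : f =ᵐ[volume.restrict (posOrthant n)] g) : MellinIntegrable a g :=
  Integrable.congr hf (hfg.mono fun x hx => by simp only [hx])

lemma mellinIntegrable_iff_integrable {a : ℝ} {z : Fin n → ℂ} (hz : ∀ j, (z j).re = -a)
    {f : (Fin n → ℝ) → ℂ} (hf : AEStronglyMeasurable f (volume.restrict (posOrthant n))) :
    MellinIntegrable a f ↔
      Integrable (fun y => (∏ j, (y j : ℂ) ^ z j) * f y) (volume.restrict (posOrthant n)) := by
  have hmeas : AEStronglyMeasurable (fun y => (∏ j, (y j : ℂ) ^ z j) * f y)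
      (volume.restrict (posOrthant n)) :=
    (by fun_prop : Measurable fun y : Fin n → ℝ => ∏ j, (y j : ℂ) ^ z j).aestronglyMeasurable.mul hf
  rw [← integrable_norm_iff hmeas]
  refine integrable_congr ((ae_restrict_mem measurableSet_posOrthant).mono fun y hy => ?_)
  simp only [norm_mul, norm_prod_ofReal_cpow hy, hz]

lemma mellinIntegral_congr_ae (z : Fin n → ℂ) {f g : (Fin n → ℝ) → ℂ}
    (hfg : f =ᵐ[volume.restrict (posOrthant n)] g) : mellinIntegral z f = mellinIntegral z g :=
  integral_congr_ae (hfg.mono fun x hx => by simp only [hx])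

lemma mellinIntegral_comp_mul {c : Fin n → ℝ} (hc : ∀ k, 0 < c k) (z : Fin n → ℂ)
    {g : (Fin n → ℝ) → ℂ}
    (hg : AEStronglyMeasurable (fun y => (∏ j, (y j : ℂ) ^ z j) * g y)
      (volume.restrict (posOrthant n))) :
    mellinIntegral z (fun x => g (c * x)) = (∏ j, (c j : ℂ) ^ (-z j - 1)) * mellinIntegral z g := by
  rw [mellinIntegral, setIntegral_congr_fun measurableSet_posOrthant
      fun x hx => prod_cpow_mul_comp_mul hc hx z g,
    integral_const_mul, integral_comp_mul_posOrthant hc hg, real_smul, ← mul_assoc,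
    prod_ofReal_cpow_neg_mul_inv hc, mellinIntegral]

lemma integral_norm_mellin_comp_mul {c : Fin n → ℝ} (hc : ∀ k, 0 < c k) (z : Fin n → ℂ)
    {g : (Fin n → ℝ) → ℂ}
    (hg : AEStronglyMeasurable (fun y => (∏ j, (y j : ℂ) ^ z j) * g y)
      (volume.restrict (posOrthant n))) :
    ∫ x in posOrthant n, ‖(∏ j, (x j : ℂ) ^ z j) * g (c * x)‖ =
      ‖∏ j, (c j : ℂ) ^ (-z j - 1)‖ * ∫ y in posOrthant n, ‖(∏ j, (y j : ℂ) ^ z j) * g y‖ := by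
  rw [setIntegral_congr_fun measurableSet_posOrthant
      fun x hx => congrArg norm (prod_cpow_mul_comp_mul hc hx z g)]
  simp only [norm_mul (∏ j, (c j : ℂ) ^ (-z j))]
  rw [integral_const_mul, integral_comp_mul_posOrthant hc hg.norm, smul_eq_mul, ← mul_assoc,
    ← prod_ofReal_cpow_neg_mul_inv hc, norm_mul, norm_real, Real.norm_of_nonneg
      (inv_nonneg.2 (Finset.prod_nonneg fun k _ => (hc k).le))]

lemma integrable_mellin_comp_mul {c : Fin n → ℝ} (hc : ∀ k, 0 < c k) (z : Fin n → ℂ)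
    {g : (Fin n → ℝ) → ℂ}
    (hg : Integrable (fun y => (∏ j, (y j : ℂ) ^ z j) * g y) (volume.restrict (posOrthant n))) :
    Integrable (fun x => (∏ j, (x j : ℂ) ^ z j) * g (c * x)) (volume.restrict (posOrthant n)) :=
  ((integrable_comp_mul_posOrthant hc hg).const_mul (∏ j, (c j : ℂ) ^ (-z j))).congr <|
    (ae_restrict_mem measurableSet_posOrthant).mono fun _ hx =>
      (prod_cpow_mul_comp_mul hc hx z g).symm

lemma diagonal_mulVec_eq_mul (c x : Fin n → ℝ) : diagonal c *ᵥ x = c * x :=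
  funext (mulVec_diagonal c x)

section Hausdorff

variable {Ω : Type*} [MeasurableSpace Ω] (μ : Measure Ω) (K : Ω → ℂ) (d : Fin n → Ω → ℝ)

noncomputable def hausdorffOp (f : (Fin n → ℝ) → ℂ) (x : Fin n → ℝ) : ℂ :=
  ∫ u, K u * f ((d · u) * x) ∂μ

noncomputable def mellinSymbol (w : Fin n → ℂ) : ℂ :=
  ∫ u, K u * ∏ k, (d k u : ℂ) ^ w k ∂μ

variable {μ K d}

lemma integrable_mul_prod_cpow (hK : Measurable K) (hd : ∀ k, Measurable (d k))
    (hdpos : ∀ k u, 0 < d k u) {w : Fin n → ℂ} {r : ℝ} (hw : ∀ k, (w k).re = r)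
    (hint : Integrable (fun u => ‖K u‖ * (∏ k, d k u) ^ r) μ) :
    Integrable (fun u => K u * ∏ k, (d k u : ℂ) ^ w k) μ := by
  refine (integrable_norm_iff (by fun_prop)).1 (hint.congr (.of_forall fun u => ?_))
  dsimp only
  rw [norm_mul, norm_prod_ofReal_cpow_of_re_eq (hdpos · u) hw]

lemma continuous_mellinSymbol (hK : Measurable K) (hd : ∀ k, Measurable (d k))
    (hdpos : ∀ k u, 0 < d k u) {β : ℂ}
    (hint : Integrable (fun u => ‖K u‖ * (∏ k, d k u) ^ β.re) μ) :
    Continuous fun s : Fin n → ℝ => mellinSymbol μ K d (fun k => β - I * s k) := by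
  refine continuous_of_dominated (fun s => ?_) (fun s => .of_forall fun u => ?_) hint
    (.of_forall fun u => ?_)
  · fun_prop
  · rw [norm_mul, norm_prod_ofReal_cpow_of_re_eq (hdpos · u) (r := β.re) fun k => by simp]
  · exact continuous_const.mul (continuous_finsetProd _ fun k _ =>
      .const_cpow (by fun_prop) (.inl (ofReal_ne_zero.2 (hdpos k u).ne')))

lemma norm_mellinSymbol_le (hdpos : ∀ k u, 0 < d k u) {w : Fin n → ℂ} {r : ℝ}
    (hw : ∀ k, (w k).re = r) :
    ‖mellinSymbol μ K d w‖ ≤ ∫ u, ‖K u‖ * (∏ k, d k u) ^ r ∂μ :=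
  (norm_integral_le_integral_norm _).trans_eq <|
    integral_congr_ae (.of_forall fun u => by
      dsimp only
      rw [norm_mul, norm_prod_ofReal_cpow_of_re_eq (hdpos · u) hw])

lemma measurable_uncurry_hausdorff_integrand (hK : Measurable K) (hd : ∀ k, Measurable (d k))
    {f : (Fin n → ℝ) → ℂ} (hf : Measurable f) :
    Measurable (Function.uncurry fun u x => K u * f ((d · u) * x)) :=
  (hK.comp measurable_fst).mul <| hf.comp <|
    (measurable_pi_lambda _ fun k => (hd k).comp measurable_fst).mul measurable_snd

lemma stronglyMeasurable_hausdorffOp [SFinite μ] (hK : Measurable K) (hd : ∀ k, Measurable (d k))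
    {f : (Fin n → ℝ) → ℂ} (hf : Measurable f) : StronglyMeasurable (hausdorffOp μ K d f) :=
  StronglyMeasurable.integral_prod_left
    (measurable_uncurry_hausdorff_integrand hK hd hf).stronglyMeasurable

lemma integrable_prod_mellin_hausdorff (hK : Measurable K) (hd : ∀ k, Measurable (d k))
    (hdpos : ∀ k u, 0 < d k u) {z : Fin n → ℂ}
    (hsymb : Integrable (fun u => K u * ∏ k, (d k u : ℂ) ^ (-z k - 1)) μ)
    {f : (Fin n → ℝ) → ℂ} (hf : Measurable f)
    (hfz : Integrable (fun y => (∏ j, (y j : ℂ) ^ z j) * f y) (volume.restrict (posOrthant n))) :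
    Integrable (Function.uncurry fun u x => (∏ j, (x j : ℂ) ^ z j) * (K u * f ((d · u) * x)))
      (μ.prod (volume.restrict (posOrthant n))) := by
  have hmeas : Measurable
      (Function.uncurry fun u x => (∏ j, (x j : ℂ) ^ z j) * (K u * f ((d · u) * x))) := by
    have := measurable_uncurry_hausdorff_integrand hK hd hf
    unfold Function.uncurry at *
    fun_prop
  rw [integrable_prod_iff hmeas.aestronglyMeasurable]
  refine ⟨.of_forall fun u => ?_, ?_⟩
  · exact ((integrable_mellin_comp_mul (hdpos · u) z hfz).const_mul (K u)).congr
      (.of_forall fun _ => mul_left_comm _ _ _)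
  · refine (hsymb.norm.mul_const
      (∫ y in posOrthant n, ‖(∏ j, (y j : ℂ) ^ z j) * f y‖)).congr (.of_forall fun u => ?_)
    simp only [Function.uncurry_apply_pair, mul_left_comm _ (K u), norm_mul (K u)]
    rw [integral_const_mul, integral_norm_mellin_comp_mul (hdpos · u) z hfz.1, mul_assoc]

theorem mellinIntegral_hausdorffOp [SFinite μ] (hK : Measurable K) (hd : ∀ k, Measurable (d k))
    (hdpos : ∀ k u, 0 < d k u) {z : Fin n → ℂ}
    (hsymb : Integrable (fun u => K u * ∏ k, (d k u : ℂ) ^ (-z k - 1)) μ)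
    {f : (Fin n → ℝ) → ℂ} (hf : Measurable f)
    (hfz : Integrable (fun y => (∏ j, (y j : ℂ) ^ z j) * f y) (volume.restrict (posOrthant n))) :
    mellinIntegral z (hausdorffOp μ K d f) =
      mellinSymbol μ K d (fun k => -z k - 1) * mellinIntegral z f :=
  calc mellinIntegral z (hausdorffOp μ K d f)
      = ∫ x in posOrthant n, ∫ u, (∏ j, (x j : ℂ) ^ z j) * (K u * f ((d · u) * x)) ∂μ := by
        simp only [mellinIntegral, hausdorffOp, integral_const_mul]
    _ = ∫ u, (∫ x in posOrthant n, (∏ j, (x j : ℂ) ^ z j) * (K u * f ((d · u) * x))) ∂μ :=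
        (integral_integral_swap
          (integrable_prod_mellin_hausdorff hK hd hdpos hsymb hf hfz)).symm
    _ = ∫ u, (K u * ∏ k, (d k u : ℂ) ^ (-z k - 1)) * mellinIntegral z f ∂μ := by
        congr 1 with u
        simp only [mul_left_comm _ (K u)]
        rw [integral_const_mul, ← mellinIntegral,
          mellinIntegral_comp_mul (hdpos · u) z hfz.1, mul_assoc]
    _ = mellinSymbol μ K d (fun k => -z k - 1) * mellinIntegral z f := integral_mul_const _ _

theorem mellinIntegral_hausdorffOp_eq_mellinSymbol_mul [SFinite μ] (hK : Measurable K)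
    (hd : ∀ k, Measurable (d k)) (hdpos : ∀ k u, 0 < d k u) {α β : ℂ} (hαβ : α + β = -1)
    (hint : Integrable (fun u => ‖K u‖ * (∏ k, d k u) ^ β.re) μ)
    {f : (Fin n → ℝ) → ℂ} (hf : Measurable f) (hfa : MellinIntegrable (-α.re) f)
    (s : Fin n → ℝ) :
    mellinIntegral (fun j => α + I * s j) (hausdorffOp μ K d f) =
      mellinSymbol μ K d (fun k => β - I * s k) * mellinIntegral (fun j => α + I * s j) f := by
  have hw : ∀ k, -(α + I * s k) - 1 = β - I * s k := fun k => by linear_combination -hαβ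
  have hsymb := integrable_mul_prod_cpow hK hd hdpos (w := fun k => β - I * s k)
    (fun k => by simp) hint
  have hfz := (mellinIntegrable_iff_integrable (z := fun j => α + I * s j) (fun j => by simp)
    hf.aestronglyMeasurable).1 hfa
  simpa only [hw] using
    mellinIntegral_hausdorffOp hK hd hdpos (by simpa only [hw] using hsymb) hf hfz

lemma MellinIntegrable.hausdorffOp [SFinite μ] (hK : Measurable K) (hd : ∀ k, Measurable (d k))
    (hdpos : ∀ k u, 0 < d k u) {a b : ℝ} (hab : a + b = 1)
    (hint : Integrable (fun u => ‖K u‖ * (∏ k, d k u) ^ (-b)) μ)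
    {f : (Fin n → ℝ) → ℂ} (hf : Measurable f) (hfa : MellinIntegrable a f) :
    MellinIntegrable a (hausdorffOp μ K d f) := by
  set z : Fin n → ℂ := fun _ => ((-a : ℝ) : ℂ)
  have hz : ∀ j, (z j).re = -a := fun j => ofReal_re _
  have hsymb : Integrable (fun u => K u * ∏ k, (d k u : ℂ) ^ (-z k - 1)) μ :=
    integrable_mul_prod_cpow hK hd hdpos (fun k => by simp [z]; linarith) hint
  have hΦ := integrable_prod_mellin_hausdorff hK hd hdpos hsymb hf
    ((mellinIntegrable_iff_integrable hz hf.aestronglyMeasurable).1 hfa)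
  refine hΦ.integral_norm_prod_right.mono' ?_
    ((ae_restrict_mem measurableSet_posOrthant).mono fun x hx => ?_)
  · have := (stronglyMeasurable_hausdorffOp hK hd hf (μ := μ)).measurable
    fun_prop
  · have hw : 0 ≤ ∏ j, x j ^ (-a) := Finset.prod_nonneg fun j _ => Real.rpow_nonneg (hx j).le _
    simp only [Function.uncurry_apply_pair, norm_mul, integral_const_mul, norm_prod_ofReal_cpow hx,
      hz, norm_norm, Real.norm_of_nonneg hw]
    refine mul_le_mul_of_nonneg_left ((norm_integral_le_integral_norm _).trans_eq ?_) hw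
    simp only [norm_mul]

end Hausdorff

lemma integrable_prod_indicator_rpow {a : ℝ} (ha : a < 1) (R : ℝ) :
    Integrable fun x : Fin n → ℝ => ∏ j, (Set.Ioc 0 R).indicator (· ^ (-a)) (x j) := by
  refine Integrable.fintype_prod (f := fun _ => (Set.Ioc 0 R).indicator (· ^ (-a))) fun _ => ?_
  rw [integrable_indicator_iff measurableSet_Ioc]
  rcases le_total R 0 with hR | hR
  · simp [Set.Ioc_eq_empty_of_le hR]
  · exact (intervalIntegrable_iff_integrableOn_Ioc_of_le hR).1
      (intervalIntegral.intervalIntegrable_rpow' (by linarith))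

lemma mellinIntegrable_of_hasCompactSupport {a : ℝ} (ha : a < 1) {g : (Fin n → ℝ) → ℂ}
    (hg : Continuous g) (hgc : HasCompactSupport g) : MellinIntegrable a g := by
  obtain ⟨C, hC⟩ := hg.bounded_above_of_compact_support hgc
  obtain ⟨R, hR⟩ := hgc.isBounded.subset_closedBall 0
  have hmeas := hg.measurable
  refine (((integrable_prod_indicator_rpow ha R).const_mul C).restrict).mono' (by fun_prop) ?_
  filter_upwards [ae_restrict_mem measurableSet_posOrthant] with x hx
  have hw : 0 ≤ ∏ j, x j ^ (-a) := Finset.prod_nonneg fun j _ => Real.rpow_nonneg (hx j).le _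
  rw [norm_mul, norm_norm, Real.norm_of_nonneg hw]
  by_cases hgx : g x = 0
  · rw [hgx, norm_zero, mul_zero]
    exact mul_nonneg ((norm_nonneg _).trans (hC x)) (Finset.prod_nonneg fun j _ =>
      Set.indicator_nonneg (fun t ht => Real.rpow_nonneg ht.1.le _) _)
  · have hxR : ∀ j, x j ∈ Set.Ioc 0 R := fun j => ⟨hx j, (le_abs_self _).trans <|
      (norm_le_pi_norm x j).trans (mem_closedBall_zero_iff.1 (hR (subset_tsupport _ hgx)))⟩
    simp only [Set.indicator_of_mem (hxR _)]
    rw [mul_comm]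
    exact mul_le_mul_of_nonneg_right (hC x) hw

theorem dense_mellinIntegrable {p : ℝ≥0∞} [Fact (1 ≤ p)] (hp : p ≠ ∞) {a : ℝ} (ha : a < 1) :
    Dense {f : Lp ℂ p (volume.restrict (posOrthant n)) | MellinIntegrable a f} := by
  refine fun f => EMetric.mem_closure_iff.2 fun ε hε => ?_
  obtain ⟨δ, hδ, hδε⟩ := exists_between hε
  obtain ⟨g, hgc, hfg, hg, hgp⟩ :=
    (Lp.memLp f).exists_hasCompactSupport_eLpNorm_sub_le hp hδ.ne'
  refine ⟨hgp.toLp g, (mellinIntegrable_of_hasCompactSupport ha hg hgc).congr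
    hgp.coeFn_toLp.symm, ?_⟩
  rw [← Lp.toLp_coeFn f (Lp.memLp f), Lp.edist_toLp_toLp]
  exact hfg.trans_lt hδε

end HausdorffMellin

open HausdorffMellin

/-- **The Mellin transform diagonalizes Hausdorff operators with positive diagonal
matrices.** With `(K f)(x) = ∫ K u * f (D(u) x) dμ`, `D(u) = diag (d k u)`, `d k u > 0`,
one has `(M (K f))(s) = φ(s) (M f)(s)` a.e. for every `f ∈ L^p(U)`, where
`φ(s) = ∫ K u * ∏_k (d k u)^{-1/p - i s_k} dμ` is bounded and continuous. -/
theorem mellin_symbol_property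
    {Ω : Type*} [MeasurableSpace Ω] (μ : Measure Ω) [SigmaFinite μ]
    (n : ℕ) (p q : ℝ≥0∞) [Fact (1 ≤ p)] [Fact (1 ≤ q)]
    (hp2 : p ≤ 2) (hpq : 1 / p + 1 / q = 1)
    (K : Ω → ℂ) (hK : Measurable K)
    (d : Fin n → Ω → ℝ) (hd : ∀ k, Measurable (d k)) (hdpos : ∀ k u, 0 < d k u)
    (hint : Integrable (fun u => ‖K u‖ * (∏ k, d k u) ^ (-(1 / p.toReal))) μ)
    (M : Lp ℂ p ((volume : Measure (Fin n → ℝ)).restrict {x | ∀ j, 0 < x j}) →L[ℂ]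
         Lp ℂ q (volume : Measure (Fin n → ℝ)))
    (hM : ∀ f : Lp ℂ p ((volume : Measure (Fin n → ℝ)).restrict {x | ∀ j, 0 < x j}),
      Integrable (fun x : Fin n → ℝ => ((∏ j, (x j : ℝ) ^ (-(1 / q.toReal)) : ℝ)) * ‖f x‖)
          ((volume : Measure (Fin n → ℝ)).restrict {x | ∀ j, 0 < x j}) →
      ∀ᵐ s : Fin n → ℝ, (M f : (Fin n → ℝ) → ℂ) s
        = (((2 * π) ^ (-(n : ℝ) / 2) : ℝ) : ℂ) *
          ∫ x in {x : Fin n → ℝ | ∀ j, 0 < x j},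
            (∏ j, (x j : ℂ) ^ ((-(1 / q.toReal) : ℂ) + Complex.I * (s j : ℂ))) * f x)
    (Kop : Lp ℂ p ((volume : Measure (Fin n → ℝ)).restrict {x | ∀ j, 0 < x j}) →L[ℂ]
           Lp ℂ p ((volume : Measure (Fin n → ℝ)).restrict {x | ∀ j, 0 < x j}))
    (hKop : ∀ f : Lp ℂ p ((volume : Measure (Fin n → ℝ)).restrict {x | ∀ j, 0 < x j}),
      ∀ᵐ x : Fin n → ℝ ∂(volume : Measure (Fin n → ℝ)).restrict {x | ∀ j, 0 < x j},
        (Kop f : (Fin n → ℝ) → ℂ) x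
          = ∫ u, K u * f ((Matrix.diagonal fun k => d k u).mulVec x) ∂μ) :
    (Continuous fun s : Fin n → ℝ =>
      ∫ u, K u * ∏ k, ((d k u : ℂ) ^ ((-(1 / p.toReal) : ℂ) - Complex.I * (s k : ℂ))) ∂μ) ∧
    (∃ Cb : ℝ, ∀ s : Fin n → ℝ,
      ‖∫ u, K u * ∏ k, ((d k u : ℂ) ^ ((-(1 / p.toReal) : ℂ) - Complex.I * (s k : ℂ))) ∂μ‖ ≤ Cb) ∧
    ∀ f : Lp ℂ p ((volume : Measure (Fin n → ℝ)).restrict {x | ∀ j, 0 < x j}),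
      ∀ᵐ s : Fin n → ℝ, (M (Kop f) : (Fin n → ℝ) → ℂ) s
        = (∫ u, K u * ∏ k, ((d k u : ℂ) ^ ((-(1 / p.toReal) : ℂ) - Complex.I * (s k : ℂ))) ∂μ)
            * (M f : (Fin n → ℝ) → ℂ) s := by
  have hp : p ≠ ∞ := ne_top_of_le_ne_top ENNReal.ofNat_ne_top hp2
  have hp0 : p ≠ 0 := (zero_lt_one.trans_le Fact.out).ne'
  have hexp : 1 / q.toReal + 1 / p.toReal = 1 := one_div_toReal_add_one_div_toReal
    (zero_lt_one.trans_le Fact.out).ne' hp0 (by rwa [add_comm])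
  have ha : 1 / q.toReal < 1 := by linarith [one_div_pos.2 (ENNReal.toReal_pos hp0 hp)]
  have hαβ : (-(1 / q.toReal) : ℂ) + (-(1 / p.toReal) : ℂ) = -1 := by
    linear_combination -(by exact_mod_cast hexp : (1 / q.toReal + 1 / p.toReal : ℂ) = 1)
  refine ⟨continuous_mellinSymbol hK hd hdpos (by simpa using hint),
    ⟨_, fun s => norm_mellinSymbol_le hdpos (r := -(1 / p.toReal)) fun k => by simp⟩, fun f => ?_⟩
  refine Dense.induction (s := {f : Lp ℂ p (volume.restrict {x : Fin n → ℝ | ∀ j, 0 < x j}) |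
      MellinIntegrable (1 / q.toReal) f}) (dense_mellinIntegrable hp ha) (fun f hf => ?_)
    (isClosed_setOf_ae_eq_mul (M.continuous.comp Kop.continuous) M.continuous _) f
  have hKf : (Kop f : (Fin n → ℝ) → ℂ) =ᵐ[volume.restrict {x : Fin n → ℝ | ∀ j, 0 < x j}]
      hausdorffOp μ K d f :=
    (hKop f).mono fun x hx => by simp only [hx, hausdorffOp, diagonal_mulVec_eq_mul]
  have hfm := (Lp.stronglyMeasurable f).measurable
  filter_upwards [hM f hf, hM (Kop f) ((hf.hausdorffOp hK hd hdpos hexp hint hfm).congr hKf.symm)]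
    with s hMf hMKf
  rw [hMKf, hMf]
  change _ * mellinIntegral _ _ = mellinSymbol μ K d _ * (_ * mellinIntegral _ _)
  rw [mellinIntegral_congr_ae _ hKf, mellinIntegral_hausdorffOp_eq_mellinSymbol_mul hK hd hdpos
    hαβ (by simpa using hint) hfm (by simpa using hf)]
  ring
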